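/- A two-column standard Young tableau T with k second-column entries b_1 < ... < b_k satisfies: the number of short edges {i,i+1} (with 1 ≤ i < n) in the associated noncrossing matching-and-ray diagram M_T on n vertices equals |τ*(T)| = #{ j in column 1 of T : j+1 in column 2 of T }. -/
import Mathlib


/-- A standard Young tableau of two-column shape `(n-k, k)^*` (first column of length
`n - k ≥ k`, second column of length `k`), with strictly increasing columns, rows
`a r < b r`, and entries exactly `{1, …, n}`. -/
structure SYT2col (n k : ℕ) where
  two_col : 2 * k ≤ n
  a : Fin (n - k) → ℕ
  b : Fin k → ℕ
  a_mono : StrictMono a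
  b_mono : StrictMono b
  row_lt : ∀ (r : Fin k) (hr : r.1 < n - k), a ⟨r.1, hr⟩ < b r
  disj : ∀ (r : Fin (n - k)) (s : Fin k), a r ≠ b s
  union : (Finset.univ.image a) ∪ (Finset.univ.image b) = Finset.Icc 1 n

/-- Greedy matching list: processing `b 0, b 1, …` in order, each `b i` is matched with
the largest entry of `c` smaller than `b i` that has not yet been used; `greedyList c b i`
is the list of the first `i` chosen partners. -/
def greedyList (c : Finset ℕ) (b : ℕ → ℕ) : ℕ → List ℕ
  | 0 => []
  | i + 1 =>
    let prev := greedyList c b i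
    prev ++ [(c.filter fun x => x < b i ∧ x ∉ prev).sup id]

/-- The partner chosen for `b i` by the greedy matching procedure. -/
def greedyPartner (c : Finset ℕ) (b : ℕ → ℕ) (i : ℕ) : ℕ :=
  (greedyList c b (i + 1)).getLastD 0

/-- The second-column entries of `T`, as a sequence: `bfun T (i-1) = b_i`. -/
def bfun {n k : ℕ} (T : SYT2col n k) (i : ℕ) : ℕ :=
  if h : i < k then T.b ⟨i, h⟩ else 0

/-- The matching edges of the noncrossing matching-and-ray diagram `M_T` on the vertices
`1, …, n`: each second-column entry `b_i`, in increasing order, is matched with the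
largest yet-unmatched first-column entry smaller than `b_i`; every unmatched vertex
carries a ray.  Edges are recorded as ordered pairs `(x, y)` with `x < y`. -/
def MTedges {n k : ℕ} (T : SYT2col n k) : Finset (ℕ × ℕ) :=
  (Finset.range k).image fun i =>
    (greedyPartner (Finset.univ.image T.a) (bfun T) i, bfun T i)

namespace SYT2colAux

lemma greedyPartner_eq (c : Finset ℕ) (b : ℕ → ℕ) (i : ℕ) :
    greedyPartner c b i =
      (c.filter fun x => x < b i ∧ x ∉ greedyList c b i).sup id := by
  unfold greedyPartner
  show (greedyList c b i ++ [_]).getLastD 0 = _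
  rw [List.getLastD_concat]

lemma mem_greedyList (c : Finset ℕ) (b : ℕ → ℕ) :
    ∀ i x, x ∈ greedyList c b i → x = 0 ∨ (x ∈ c ∧ ∃ m < i, x < b m) := by
  intro i
  induction i with
  | zero => simp [greedyList]
  | succ i ih =>
    intro x hx
    have hx' : x ∈ greedyList c b i ∨
        x = (c.filter fun y => y < b i ∧ y ∉ greedyList c b i).sup id := by
      simpa [greedyList] using hx
    rcases hx' with hx' | hx'
    · rcases ih x hx' with h | ⟨hc, m, hm, hlt⟩
      · exact Or.inl h
      · exact Or.inr ⟨hc, m, Nat.lt_succ_of_lt hm, hlt⟩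
    · by_cases hne : (c.filter fun y => y < b i ∧ y ∉ greedyList c b i).Nonempty
      · obtain ⟨y, hy, hysup⟩ := Finset.exists_mem_eq_sup _ hne id
        rw [hx', hysup]
        simp only [Finset.mem_filter] at hy
        exact Or.inr ⟨hy.1, i, Nat.lt_succ_self i, hy.2.1⟩
      · rw [Finset.not_nonempty_iff_eq_empty] at hne
        rw [hx', hne]
        simp

end SYT2colAux

open SYT2colAux in
/-- The number of short edges `{i, i+1}` (with `1 ≤ i < n`, no wraparound) in the
noncrossing matching-and-ray diagram `M_T` equals `|τ*(T)|`, the number of entries `j`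
of the first column of `T` such that `j + 1` lies in the second column. -/
theorem shortEdges_eq_tauStar (n k : ℕ) (T : SYT2col n k) :
    ((MTedges T).filter fun p => p.2 = p.1 + 1).card =
      ((Finset.univ.image T.a).filter fun j => j + 1 ∈ Finset.univ.image T.b).card := by
  set c : Finset ℕ := Finset.univ.image T.a with hc
  set B : ℕ → ℕ := bfun T with hBdef
  set g : ℕ → ℕ := greedyPartner c B with hg
  -- basic entry bounds
  have hsub : ∀ x ∈ c ∪ Finset.univ.image T.b, 1 ≤ x := by
    intro x hx
    rw [T.union] at hx
    exact (Finset.mem_Icc.mp hx).1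
  have ha1 : ∀ r, 1 ≤ T.a r := fun r =>
    hsub _ (Finset.mem_union_left _ (Finset.mem_image_of_mem _ (Finset.mem_univ r)))
  have hBval : ∀ i (hi : i < k), B i = T.b ⟨i, hi⟩ := by
    intro i hi; simp [hBdef, bfun, hi]
  have hB2 : ∀ i, i < k → 2 ≤ B i := by
    intro i hi
    have htc := T.two_col
    have hr : i < n - k := lt_of_lt_of_le hi (by omega : k ≤ n - k)
    have h1 : T.a ⟨i, hr⟩ < T.b ⟨i, hi⟩ := T.row_lt ⟨i, hi⟩ hr
    have h2 := ha1 ⟨i, hr⟩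
    rw [hBval i hi]
    omega
  have hBmono : ∀ i j, i < j → j < k → B i < B j := by
    intro i j hij hj
    rw [hBval i (hij.trans hj), hBval j hj]
    exact T.b_mono hij
  -- elements of the greedy list at step i are < B i - 1
  have hlist : ∀ i, i < k → ∀ x ∈ greedyList c B i, x + 1 < B i := by
    intro i hi x hx
    rcases mem_greedyList c B i x hx with h | ⟨_, m, hm, hlt⟩
    · have := hB2 i hi; omega
    · have := hBmono m i hm hi; omega
  -- forward: if B i - 1 ∈ c then g i = B i - 1
  have hfwd : ∀ i, i < k → B i - 1 ∈ c → g i = B i - 1 := by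
    intro i hi hmem
    rw [hg, greedyPartner_eq]
    have h2 := hB2 i hi
    have hin : B i - 1 ∈ c.filter fun x => x < B i ∧ x ∉ greedyList c B i := by
      refine Finset.mem_filter.mpr ⟨hmem, by omega, fun hmem' => ?_⟩
      have := hlist i hi _ hmem'
      omega
    refine le_antisymm (Finset.sup_le fun x hx => ?_) (Finset.le_sup (f := id) hin)
    have := (Finset.mem_filter.mp hx).2.1
    simp only [id]
    omega
  -- backward: if B i = g i + 1 then B i - 1 ∈ c
  have hbwd : ∀ i, i < k → B i = g i + 1 → B i - 1 ∈ c := by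
    intro i hi heq
    have h2 := hB2 i hi
    rw [hg, greedyPartner_eq] at heq
    by_cases hne : (c.filter fun x => x < B i ∧ x ∉ greedyList c B i).Nonempty
    · obtain ⟨y, hy, hysup⟩ := Finset.exists_mem_eq_sup _ hne id
      rw [hysup] at heq
      have : y = B i - 1 := by simp only [id] at heq ⊢; omega
      rw [← this]
      exact (Finset.mem_filter.mp hy).1
    · rw [Finset.not_nonempty_iff_eq_empty] at hne
      rw [hne] at heq
      simp at heq
      omega
  -- rewrite LHS
  have himg : (MTedges T).filter (fun p => p.2 = p.1 + 1) =
      ((Finset.range k).filter fun i => B i = g i + 1).image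
        fun i => (g i, B i) := by
    rw [MTedges, Finset.filter_image]
  rw [himg]
  rw [Finset.card_image_of_injOn]
  · -- bijection between index set and the tau* set
    refine Finset.card_bij (fun i _ => B i - 1) ?_ ?_ ?_
    · intro i hi
      simp only [Finset.mem_filter, Finset.mem_range] at hi
      refine Finset.mem_filter.mpr ⟨hbwd i hi.1 hi.2, ?_⟩
      have h2 := hB2 i hi.1
      show B i - 1 + 1 ∈ Finset.univ.image T.b
      have he : B i - 1 + 1 = B i := by omega
      rw [he, hBval i hi.1]
      exact Finset.mem_image_of_mem _ (Finset.mem_univ _)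
    · intro i hi j hj hij
      have hij' : B i - 1 = B j - 1 := hij
      simp only [Finset.mem_filter, Finset.mem_range] at hi hj
      have h2i := hB2 i hi.1
      have h2j := hB2 j hj.1
      by_contra hne
      rcases Nat.lt_or_ge i j with h | h
      · have := hBmono i j h hj.1; omega
      · have hlt : j < i := by omega
        have := hBmono j i hlt hi.1; omega
    · intro j hj
      simp only [Finset.mem_filter] at hj
      obtain ⟨hjc, hjb⟩ := hj
      obtain ⟨s, _, hs⟩ := Finset.mem_image.mp hjb
      have hsB : B s.1 = j + 1 := by rw [hBval s.1 s.2]; simp [hs]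
      have hmem : B s.1 - 1 ∈ c := by rw [hsB]; simpa using hjc
      have hgs : g s.1 = j := by
        have := hfwd s.1 s.2 hmem
        omega
      refine ⟨s.1, Finset.mem_filter.mpr ⟨Finset.mem_range.mpr s.2, by omega⟩, show B s.1 - 1 = j by omega⟩
  · -- injectivity of i ↦ (g i, B i) on the filtered range
    intro i hi j hj hij
    simp only [Finset.mem_coe, Finset.mem_filter, Finset.mem_range] at hi hj
    have hB : B i = B j := congrArg Prod.snd hij
    by_contra hne
    rcases Nat.lt_or_ge i j with h | h
    · exact absurd hB (hBmono i j h hj.1).ne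
    · exact absurd hB.symm (hBmono j i (by omega) hi.1).ne
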